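/- arXiv:2311.06597 — 3 statements merged into one kernel-verified Lean document; each statement's English description precedes it below -/
import Mathlib

section
/- Let f : ℝ^d → ℝ^k be differentiable with L-Lipschitz total derivative (L ≥ 0), let (x_1,y_1),…,(x_n,y_n) with n ≥ 1 be training samples, each x_i ≠ 0, such that f(x_i) = e_{y_i} for every i. Let W be a real m×p matrix and S ≥ 0 a real number such that (1/n)·∑_{i=1}^n ‖Df(x_i)‖_op² ≤ (∑_{r,s} W_{rs}²)·S / min_i ‖x_i‖₂². Set ε̂ = min{1, 1/(2(√(n·(∑_{r,s} |W_{rs}|)²·S / min_i ‖x_i‖₂²) + L))}. Let T be a finite set of test pairs and 0 ≤ δ ≤ 1. If at least δ·|T| of the pairs (x′,y′) ∈ T admit an index i with y_i = y′ and ‖x′ − x_i‖₂ ≤ ε̂, then at least δ·|T| of the pairs (x′,y′) ∈ T satisfy f(x′)_j ≤ f(x′)_{y′} for every coordinate j. -/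
open scoped Classical

/-
Near a training point `x_i` the network is within `‖Df(x_i)‖ ε + L ε²` of `f(x_i) = e_{y_i}`, by
Taylor's bound for a map with `L`-Lipschitz derivative. The averaged derivative hypothesis bounds
each `‖Df(x_i)‖²` by `n ‖W‖_F² S / min_i ‖x_i‖²`, and `‖W‖_F ≤ ‖W‖₁` turns this into the radius
`R` appearing in `ε̂`. The choice `ε̂ ≤ min 1 (1/(2(R + L)))` then keeps `f(x′)` within `1/2` of
`e_{y_i}`, so its `y_i`-th coordinate is at least `1/2` and every other one at most `1/2`.
-/

theorem norm_sub_sub_fderiv_le_of_lipschitz_fderiv {E F : Type*} [NormedAddCommGroup E]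
    [NormedSpace ℝ E] [NormedAddCommGroup F] [NormedSpace ℝ F] {f : E → F} {L : ℝ}
    (hf : Differentiable ℝ f) (hL : 0 ≤ L)
    (hlip : ∀ u v, ‖fderiv ℝ f u - fderiv ℝ f v‖ ≤ L * ‖u - v‖) (u v : E) :
    ‖f u - f v - fderiv ℝ f v (u - v)‖ ≤ L * ‖u - v‖ ^ 2 := by
  have bound : ∀ w ∈ Metric.closedBall v ‖u - v‖,
      ‖fderiv ℝ f w - fderiv ℝ f v‖ ≤ L * ‖u - v‖ := fun w hw =>
    (hlip w v).trans (mul_le_mul_of_nonneg_left (mem_closedBall_iff_norm.mp hw) hL)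
  calc ‖f u - f v - fderiv ℝ f v (u - v)‖ ≤ L * ‖u - v‖ * ‖u - v‖ :=
        (convex_closedBall v ‖u - v‖).norm_image_sub_le_of_norm_fderiv_le' (fun w _ => hf w)
          bound (Metric.mem_closedBall_self (norm_nonneg _))
          (mem_closedBall_iff_norm.mpr le_rfl)
    _ = L * ‖u - v‖ ^ 2 := by ring

theorem norm_sub_le_of_lipschitz_fderiv {E F : Type*} [NormedAddCommGroup E]
    [NormedSpace ℝ E] [NormedAddCommGroup F] [NormedSpace ℝ F] {f : E → F} {L ε : ℝ}
    (hf : Differentiable ℝ f) (hL : 0 ≤ L)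
    (hlip : ∀ u v, ‖fderiv ℝ f u - fderiv ℝ f v‖ ≤ L * ‖u - v‖) {u v : E}
    (huv : ‖u - v‖ ≤ ε) (hε : ε ≤ 1) :
    ‖f u - f v‖ ≤ (‖fderiv ℝ f v‖ + L) * ε := by
  have hsq : ‖u - v‖ ^ 2 ≤ ε := by nlinarith [norm_nonneg (u - v)]
  calc ‖f u - f v‖
      ≤ ‖f u - f v - fderiv ℝ f v (u - v)‖ + ‖fderiv ℝ f v (u - v)‖ := norm_le_norm_sub_add _ _
    _ ≤ L * ‖u - v‖ ^ 2 + ‖fderiv ℝ f v‖ * ‖u - v‖ :=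
        add_le_add (norm_sub_sub_fderiv_le_of_lipschitz_fderiv hf hL hlip u v)
          ((fderiv ℝ f v).le_opNorm _)
    _ ≤ L * ε + ‖fderiv ℝ f v‖ * ε := by gcongr
    _ = (‖fderiv ℝ f v‖ + L) * ε := by ring

theorem apply_le_apply_of_norm_sub_single_le {k : ℕ} {v : EuclideanSpace ℝ (Fin k)} {c : Fin k}
    (hv : ‖v - EuclideanSpace.single c 1‖ ≤ 1 / 2) (j : Fin k) : v j ≤ v c := by
  have hcoord : ∀ j', |v j' - EuclideanSpace.single c (1 : ℝ) j'| ≤ 1 / 2 := fun j' =>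
    (PiLp.norm_apply_le (v - EuclideanSpace.single c 1) j').trans hv
  have hc := abs_le.mp (hcoord c)
  by_cases hj : j = c
  · rw [hj]
  · have hj' := abs_le.mp (hcoord j)
    simp only [PiLp.single_apply, hj, if_true, if_false] at hc hj'
    linarith [hc.1, hj'.2]

theorem sum_sq_le_sq_sum_abs {ι : Type*} [Fintype ι] (a : ι → ℝ) :
    ∑ i, a i ^ 2 ≤ (∑ i, |a i|) ^ 2 := by
  simpa only [sq_abs] using
    Finset.sum_sq_le_sq_sum_of_nonneg (s := Finset.univ) fun i _ => abs_nonneg (a i)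

theorem Matrix.sum_sq_le_sq_sum_abs {m p : Type*} [Fintype m] [Fintype p]
    (W : Matrix m p ℝ) : ∑ r, ∑ s, W r s ^ 2 ≤ (∑ r, ∑ s, |W r s|) ^ 2 := by
  simpa only [Fintype.sum_prod_type] using _root_.sum_sq_le_sq_sum_abs fun q : m × p => W q.1 q.2

theorem abs_le_sqrt_card_mul_of_mean_sq_le {ι : Type*} [Fintype ι] {a : ι → ℝ} {B : ℝ}
    (h : (1 / (Fintype.card ι : ℝ)) * ∑ i, a i ^ 2 ≤ B) (i : ι) :
    |a i| ≤ Real.sqrt (Fintype.card ι * B) := by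
  have hcard : (0 : ℝ) < Fintype.card ι := by exact_mod_cast Fintype.card_pos_iff.mpr ⟨i⟩
  have hsum : ∑ j, a j ^ 2 ≤ Fintype.card ι * B := by
    rwa [one_div, inv_mul_le_iff₀ hcard] at h
  rw [← Real.sqrt_sq_eq_abs]
  exact Real.sqrt_le_sqrt <|
    (Finset.single_le_sum (fun j _ => sq_nonneg (a j)) (Finset.mem_univ i)).trans hsum

theorem mul_le_half_of_le_one_div_two_mul {ε c : ℝ} (hc : 0 ≤ c) (h : ε ≤ 1 / (2 * c)) :
    ε * c ≤ 1 / 2 := by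
  rcases hc.eq_or_lt with rfl | hc
  · norm_num
  · rw [le_div_iff₀ (by positivity)] at h
    linarith

theorem statement4_general {d k n m p : ℕ}
    (f : EuclideanSpace ℝ (Fin d) → EuclideanSpace ℝ (Fin k))
    (L : ℝ) (hL : 0 ≤ L)
    (hf : Differentiable ℝ f)
    (hlip : ∀ u v, ‖fderiv ℝ f u - fderiv ℝ f v‖ ≤ L * ‖u - v‖)
    (x : Fin n → EuclideanSpace ℝ (Fin d)) (y : Fin n → Fin k)
    (hinterp : ∀ i, f (x i) = EuclideanSpace.single (y i) 1)
    (W : Matrix (Fin m) (Fin p) ℝ) (S : ℝ) (hS : 0 ≤ S)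
    (hB : (1 / (n : ℝ)) * ∑ i, ‖fderiv ℝ f (x i)‖ ^ 2 ≤
      (∑ r, ∑ s, (W r s) ^ 2) * S / ⨅ i, ‖x i‖ ^ 2)
    (ε : ℝ) (hε : ε = min 1 (1 / (2 * (Real.sqrt
      ((n : ℝ) * (∑ r, ∑ s, |W r s|) ^ 2 * S / ⨅ i, ‖x i‖ ^ 2) + L))))
    (T : Finset (EuclideanSpace ℝ (Fin d) × Fin k))
    (δ : ℝ)
    (hcover : δ * T.card ≤
      (T.filter (fun q => ∃ i, y i = q.2 ∧ ‖q.1 - x i‖ ≤ ε)).card) :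
    δ * T.card ≤
      (T.filter (fun q => ∀ j, f q.1 j ≤ f q.1 q.2)).card := by
  set M := ⨅ i, ‖x i‖ ^ 2
  set R := Real.sqrt ((n : ℝ) * (∑ r, ∑ s, |W r s|) ^ 2 * S / M)
  have hM : 0 ≤ M := Real.iInf_nonneg fun i => sq_nonneg _
  have hderiv : ∀ i, ‖fderiv ℝ f (x i)‖ ≤ R := fun i => by
    have hmean := abs_le_sqrt_card_mul_of_mean_sq_le (a := fun j => ‖fderiv ℝ f (x j)‖)
      (by simpa only [Fintype.card_fin] using hB) i
    rw [abs_norm, Fintype.card_fin] at hmean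
    refine hmean.trans (Real.sqrt_le_sqrt ?_)
    rw [← mul_div_assoc, ← mul_assoc]
    gcongr
    exact W.sum_sq_le_sq_sum_abs
  have hεRL : ε * (R + L) ≤ 1 / 2 :=
    mul_le_half_of_le_one_div_two_mul (by positivity) (hε ▸ min_le_right _ _)
  refine hcover.trans (Nat.cast_le.mpr (Finset.card_le_card (Finset.monotone_filter_right _ ?_)))
  rintro ⟨u, c⟩ - ⟨i, rfl, hdist⟩
  refine apply_le_apply_of_norm_sub_single_le ?_
  rw [← hinterp i]
  have hε0 : 0 ≤ ε := (norm_nonneg _).trans hdist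
  calc ‖f u - f (x i)‖ ≤ (‖fderiv ℝ f (x i)‖ + L) * ε :=
        norm_sub_le_of_lipschitz_fderiv hf hL hlip hdist (hε ▸ min_le_left _ _)
    _ ≤ (R + L) * ε := by gcongr; exact hderiv i
    _ ≤ 1 / 2 := by linarith

/-- the `l₁`-decay corollary. With the average squared derivative
norm bounded by `‖W‖_F² · S / min_i ‖x_i‖₂²`, a fraction `δ` of the test pairs
having a same-label training neighbour within distance
`ε̂ = min 1 (1/(2(√(n·‖W‖₁²·S/min_i‖x_i‖₂²) + L)))` is correctly classified. -/
theorem statement4 {d k n m p : ℕ} (hn : 1 ≤ n)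
    (f : EuclideanSpace ℝ (Fin d) → EuclideanSpace ℝ (Fin k))
    (L : ℝ) (hL : 0 ≤ L)
    (hf : Differentiable ℝ f)
    (hlip : ∀ u v, ‖fderiv ℝ f u - fderiv ℝ f v‖ ≤ L * ‖u - v‖)
    (x : Fin n → EuclideanSpace ℝ (Fin d)) (y : Fin n → Fin k)
    (hx : ∀ i, x i ≠ 0)
    (hinterp : ∀ i, f (x i) = EuclideanSpace.single (y i) 1)
    (W : Matrix (Fin m) (Fin p) ℝ) (S : ℝ) (hS : 0 ≤ S)
    (hB : (1 / (n : ℝ)) * ∑ i, ‖fderiv ℝ f (x i)‖ ^ 2 ≤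
      (∑ r, ∑ s, (W r s) ^ 2) * S / ⨅ i, ‖x i‖ ^ 2)
    (ε : ℝ) (hε : ε = min 1 (1 / (2 * (Real.sqrt
      ((n : ℝ) * (∑ r, ∑ s, |W r s|) ^ 2 * S / ⨅ i, ‖x i‖ ^ 2) + L))))
    (T : Finset (EuclideanSpace ℝ (Fin d) × Fin k))
    (δ : ℝ) (hδ0 : 0 ≤ δ) (hδ1 : δ ≤ 1)
    (hcover : δ * T.card ≤
      (T.filter (fun q => ∃ i, y i = q.2 ∧ ‖q.1 - x i‖ ≤ ε)).card) :
    δ * T.card ≤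
      (T.filter (fun q => ∀ j, f q.1 j ≤ f q.1 q.2)).card :=
  statement4_general f L hL hf hlip x y hinterp W S hS hB ε hε T δ hcover
end

section
/- Let n ≥ 1 and let z⁽¹⁾_1,…,z⁽¹⁾_n, z⁽²⁾_1,…,z⁽²⁾_n and (z′)⁽¹⁾_1,…,(z′)⁽¹⁾_n, (z′)⁽²⁾_1,…,(z′)⁽²⁾_n be vectors in ℝ^d, each of Euclidean norm 1, with Gram matrices G₁, G₂, G′₁, G′₂ (so (G_k)_{ij} = ⟨z⁽ᵏ⁾_i, z⁽ᵏ⁾_j⟩ and likewise for G′_k). Then |I₂(G₁;G₂) − I₂(G′₁;G′₂)| ≤ 16·∑_{k=1}^{2} ∑_{i=1}^{n} ‖z⁽ᵏ⁾_i − (z′)⁽ᵏ⁾_i‖₂. -/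
open scoped RealInnerProductSpace

/-- Order-2 matrix (Rényi) entropy `H₂(K) = -log(tr((n⁻¹K)²))`. -/
noncomputable def H2 {n : ℕ} (K : Matrix (Fin n) (Fin n) ℝ) : ℝ :=
  -Real.log (Matrix.trace (((n : ℝ)⁻¹ • K) ^ 2))

/-- Gram matrix of a family of vectors. -/
noncomputable def gram {n d : ℕ} (z : Fin n → EuclideanSpace ℝ (Fin d)) :
    Matrix (Fin n) (Fin n) ℝ :=
  Matrix.of fun i j => ⟪z i, z j⟫

/-- Order-2 matrix mutual information `I₂(R₁;R₂) = H₂(R₁) + H₂(R₂) - H₂(R₁⊙R₂)`. -/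
noncomputable def I2 {n : ℕ} (R₁ R₂ : Matrix (Fin n) (Fin n) ℝ) : ℝ :=
  H2 R₁ + H2 R₂ - H2 (Matrix.hadamard R₁ R₂)

/-!
For a symmetric matrix `K` with unit diagonal and entries in `[-1, 1]`,
`H₂(K) = -log (n⁻² ∑ᵢⱼ Kᵢⱼ²)`, and the diagonal alone makes the argument of the logarithm at
least `n⁻¹`. On `[n⁻¹, ∞)` the logarithm is `n`-Lipschitz and on `[-1, 1]` squaring is
`2`-Lipschitz, so `|H₂(K) - H₂(K')| ≤ 2 n⁻¹ ∑ᵢⱼ |Kᵢⱼ - K'ᵢⱼ|`.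
Gram matrices of unit vectors and their Hadamard products are such matrices, and moving the
vectors by `fᵢ` moves the `(i, j)` entry by at most `fᵢ + fⱼ`; summing over `i, j` gives
`2n ∑ᵢ fᵢ`, so each of the three entropies in `I₂` moves by at most `4 ∑ᵢ fᵢ`.
-/

open scoped Matrix

namespace Real

theorem abs_log_sub_log_le {a b c : ℝ} (hc : 0 < c) (ha : c ≤ a) (hb : c ≤ b) :
    |log a - log b| ≤ |a - b| / c := by
  wlog h : b ≤ a generalizing a b
  · rw [abs_sub_comm, abs_sub_comm a b]
    exact this hb ha (le_of_not_ge h)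
  have ha₀ : 0 < a := hc.trans_le ha
  have hb₀ : 0 < b := hc.trans_le hb
  rw [abs_of_nonneg (sub_nonneg.2 (log_le_log hb₀ h)), abs_of_nonneg (sub_nonneg.2 h),
    ← log_div ha₀.ne' hb₀.ne']
  calc log (a / b) ≤ a / b - 1 := log_le_sub_one_of_pos (div_pos ha₀ hb₀)
    _ = (a - b) / b := by field_simp
    _ ≤ (a - b) / c := div_le_div_of_nonneg_left (sub_nonneg.2 h) hc hb

end Real

theorem abs_sq_sub_sq_le {a b : ℝ} (ha : |a| ≤ 1) (hb : |b| ≤ 1) :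
    |a ^ 2 - b ^ 2| ≤ 2 * |a - b| := by
  rw [sq_sub_sq, abs_mul]
  gcongr
  linarith [abs_add_le a b]

theorem abs_mul_sub_mul_le {a b a' b' : ℝ} (hb : |b| ≤ 1) (ha' : |a'| ≤ 1) :
    |a * b - a' * b'| ≤ |a - a'| + |b - b'| :=
  calc |a * b - a' * b'| = |(a - a') * b + a' * (b - b')| := by ring_nf
    _ ≤ |a - a'| * |b| + |a'| * |b - b'| := by rw [← abs_mul, ← abs_mul]; exact abs_add_le _ _
    _ ≤ |a - a'| + |b - b'| :=
      add_le_add (mul_le_of_le_one_right (abs_nonneg _) hb)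
        (mul_le_of_le_one_left (abs_nonneg _) ha')

theorem abs_real_inner_sub_inner_le {E : Type*} [NormedAddCommGroup E] [InnerProductSpace ℝ E]
    {u v u' v' : E} (hv : ‖v‖ ≤ 1) (hu' : ‖u'‖ ≤ 1) :
    |⟪u, v⟫ - ⟪u', v'⟫| ≤ ‖u - u'‖ + ‖v - v'‖ :=
  calc |⟪u, v⟫ - ⟪u', v'⟫| = |⟪u - u', v⟫ + ⟪u', v - v'⟫| := by
        rw [inner_sub_left, inner_sub_right]; ring_nf
    _ ≤ ‖u - u'‖ * ‖v‖ + ‖u'‖ * ‖v - v'‖ :=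
      (abs_add_le _ _).trans (add_le_add (abs_real_inner_le_norm _ _) (abs_real_inner_le_norm _ _))
    _ ≤ ‖u - u'‖ + ‖v - v'‖ :=
      add_le_add (mul_le_of_le_one_right (norm_nonneg _) hv)
        (mul_le_of_le_one_left (norm_nonneg _) hu')

theorem Matrix.IsSymm.trace_sq {ι : Type*} [Fintype ι] [DecidableEq ι] {K : Matrix ι ι ℝ}
    (hK : K.IsSymm) :
    (K ^ 2).trace = ∑ i, ∑ j, K i j ^ 2 := by
  calc (K ^ 2).trace = (K * Kᵀ).trace := by rw [hK.eq, sq]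
    _ = ∑ i, ∑ j, K i j ^ 2 := by simp only [← Matrix.sum_hadamard_eq, Matrix.hadamard_apply, sq]

/-- A correlation matrix, except that positive semidefiniteness is not required. -/
structure IsCorrelationLike {ι : Type*} (K : Matrix ι ι ℝ) : Prop where
  isSymm : K.IsSymm
  diag_eq_one : ∀ i, K i i = 1
  abs_le_one : ∀ i j, |K i j| ≤ 1

namespace IsCorrelationLike

variable {ι : Type*} {A B : Matrix ι ι ℝ}

theorem hadamard (hA : IsCorrelationLike A) (hB : IsCorrelationLike B) :
    IsCorrelationLike (A ⊙ B) where
  isSymm := by rw [Matrix.IsSymm, Matrix.transpose_hadamard, hA.isSymm.eq, hB.isSymm.eq]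
  diag_eq_one i := by rw [Matrix.hadamard_apply, hA.diag_eq_one, hB.diag_eq_one, mul_one]
  abs_le_one i j := by
    rw [Matrix.hadamard_apply, abs_mul]
    exact mul_le_one₀ (hA.abs_le_one i j) (abs_nonneg _) (hB.abs_le_one i j)

theorem card_le_sum_sq [Fintype ι] (hA : IsCorrelationLike A) :
    (Fintype.card ι : ℝ) ≤ ∑ i, ∑ j, A i j ^ 2 :=
  calc (Fintype.card ι : ℝ) = ∑ i, A i i ^ 2 := by simp [hA.diag_eq_one]
    _ ≤ ∑ i, ∑ j, A i j ^ 2 := Finset.sum_le_sum fun i _ =>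
      Finset.single_le_sum (f := fun j => A i j ^ 2) (fun j _ => sq_nonneg _) (Finset.mem_univ i)

end IsCorrelationLike

theorem H2_eq_neg_log_sum_sq {n : ℕ} {K : Matrix (Fin n) (Fin n) ℝ} (hK : K.IsSymm) :
    H2 K = -Real.log ((n : ℝ)⁻¹ ^ 2 * ∑ i, ∑ j, K i j ^ 2) := by
  rw [H2, smul_pow, Matrix.trace_smul, hK.trace_sq, smul_eq_mul]

theorem abs_H2_sub_H2_le {n : ℕ} (hn : 0 < n) {K K' : Matrix (Fin n) (Fin n) ℝ}
    (hK : IsCorrelationLike K) (hK' : IsCorrelationLike K') :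
    |H2 K - H2 K'| ≤ 2 * (n : ℝ)⁻¹ * ∑ i, ∑ j, |K i j - K' i j| := by
  have hn₀ : (0 : ℝ) < n := Nat.cast_pos.2 hn
  have lower {M : Matrix (Fin n) (Fin n) ℝ} (hM : IsCorrelationLike M) :
      (n : ℝ)⁻¹ ≤ (n : ℝ)⁻¹ ^ 2 * ∑ i, ∑ j, M i j ^ 2 :=
    calc (n : ℝ)⁻¹ = (n : ℝ)⁻¹ ^ 2 * n := by field_simp
      _ ≤ _ := by gcongr; simpa using hM.card_le_sum_sq
  have sq_sum : |∑ i, ∑ j, (K i j ^ 2 - K' i j ^ 2)| ≤ ∑ i, ∑ j, 2 * |K i j - K' i j| :=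
    (Finset.abs_sum_le_sum_abs _ _).trans <| Finset.sum_le_sum fun i _ =>
      (Finset.abs_sum_le_sum_abs _ _).trans <| Finset.sum_le_sum fun j _ =>
        abs_sq_sub_sq_le (hK.abs_le_one i j) (hK'.abs_le_one i j)
  rw [H2_eq_neg_log_sum_sq hK.isSymm, H2_eq_neg_log_sum_sq hK'.isSymm, neg_sub_neg, abs_sub_comm]
  calc _ ≤ |(n : ℝ)⁻¹ ^ 2 * ∑ i, ∑ j, K i j ^ 2 - (n : ℝ)⁻¹ ^ 2 * ∑ i, ∑ j, K' i j ^ 2| /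
        (n : ℝ)⁻¹ := Real.abs_log_sub_log_le (inv_pos.2 hn₀) (lower hK) (lower hK')
    _ = (n : ℝ)⁻¹ * |∑ i, ∑ j, (K i j ^ 2 - K' i j ^ 2)| := by
      simp only [← mul_sub, ← Finset.sum_sub_distrib, abs_mul, abs_of_pos (inv_pos.2 hn₀),
        abs_pow]
      field_simp
    _ ≤ (n : ℝ)⁻¹ * ∑ i, ∑ j, 2 * |K i j - K' i j| := by gcongr
    _ = _ := by simp only [← Finset.mul_sum]; ring

theorem abs_H2_sub_H2_le_of_abs_sub_le {n : ℕ} (hn : 0 < n) {K K' : Matrix (Fin n) (Fin n) ℝ}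
    (hK : IsCorrelationLike K) (hK' : IsCorrelationLike K') (f : Fin n → ℝ)
    (hf : ∀ i j, |K i j - K' i j| ≤ f i + f j) :
    |H2 K - H2 K'| ≤ 4 * ∑ i, f i := by
  have hn₀ : (n : ℝ) ≠ 0 := Nat.cast_ne_zero.2 hn.ne'
  have sum_add : ∑ i : Fin n, ∑ j : Fin n, (f i + f j) = 2 * n * ∑ i, f i := by
    simp only [Finset.sum_add_distrib, Finset.sum_const, Finset.card_univ, Fintype.card_fin,
      nsmul_eq_mul, ← Finset.mul_sum]
    ring
  calc |H2 K - H2 K'| ≤ 2 * (n : ℝ)⁻¹ * ∑ i, ∑ j, |K i j - K' i j| := abs_H2_sub_H2_le hn hK hK'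
    _ ≤ 2 * (n : ℝ)⁻¹ * (2 * n * ∑ i, f i) := by
      rw [← sum_add]
      gcongr with i _ j _
      exact hf i j
    _ = 4 * ∑ i, f i := by field_simp; ring

section Gram

variable {n d : ℕ} {z z' : Fin n → EuclideanSpace ℝ (Fin d)}

theorem isCorrelationLike_gram (hz : ∀ i, ‖z i‖ = 1) : IsCorrelationLike (gram z) where
  isSymm := Matrix.IsSymm.ext fun i j => real_inner_comm (z i) (z j)
  diag_eq_one i := by simp [gram, hz i]
  abs_le_one i j := by simpa [gram, hz i, hz j] using abs_real_inner_le_norm (z i) (z j)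

theorem abs_gram_sub_gram_le (hz : ∀ i, ‖z i‖ = 1) (hz' : ∀ i, ‖z' i‖ = 1) (i j : Fin n) :
    |gram z i j - gram z' i j| ≤ ‖z i - z' i‖ + ‖z j - z' j‖ :=
  abs_real_inner_sub_inner_le (hz j).le (hz' i).le

end Gram

/-- mutual-information difference bound:
`|I₂(G₁;G₂) - I₂(G′₁;G′₂)| ≤ 16 ∑ₖ ∑ᵢ ‖z⁽ᵏ⁾ᵢ - (z′)⁽ᵏ⁾ᵢ‖`. -/
theorem statement11 {n d : ℕ} (hn : 1 ≤ n)
    (z1 z2 z1' z2' : Fin n → EuclideanSpace ℝ (Fin d))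
    (hz1 : ∀ i, ‖z1 i‖ = 1) (hz2 : ∀ i, ‖z2 i‖ = 1)
    (hz1' : ∀ i, ‖z1' i‖ = 1) (hz2' : ∀ i, ‖z2' i‖ = 1) :
    |I2 (gram z1) (gram z2) - I2 (gram z1') (gram z2')| ≤
      16 * ((∑ i, ‖z1 i - z1' i‖) + ∑ i, ‖z2 i - z2' i‖) := by
  have h₁ := abs_H2_sub_H2_le_of_abs_sub_le hn (isCorrelationLike_gram hz1)
    (isCorrelationLike_gram hz1') _ (abs_gram_sub_gram_le hz1 hz1')
  have h₂ := abs_H2_sub_H2_le_of_abs_sub_le hn (isCorrelationLike_gram hz2)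
    (isCorrelationLike_gram hz2') _ (abs_gram_sub_gram_le hz2 hz2')
  have h₁₂ := abs_H2_sub_H2_le_of_abs_sub_le hn
    ((isCorrelationLike_gram hz1).hadamard (isCorrelationLike_gram hz2))
    ((isCorrelationLike_gram hz1').hadamard (isCorrelationLike_gram hz2'))
    (fun i => ‖z1 i - z1' i‖ + ‖z2 i - z2' i‖) fun i j =>
      (abs_mul_sub_mul_le ((isCorrelationLike_gram hz2).abs_le_one i j)
        ((isCorrelationLike_gram hz1').abs_le_one i j)).trans <| by
        linarith [abs_gram_sub_gram_le hz1 hz1' i j, abs_gram_sub_gram_le hz2 hz2' i j]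
  rw [Finset.sum_add_distrib] at h₁₂
  have hD₁ : 0 ≤ ∑ i, ‖z1 i - z1' i‖ := Finset.sum_nonneg fun i _ => norm_nonneg _
  have hD₂ : 0 ≤ ∑ i, ‖z2 i - z2' i‖ := Finset.sum_nonneg fun i _ => norm_nonneg _
  rw [I2, I2, abs_le]
  constructor <;> linarith [abs_le.1 h₁, abs_le.1 h₂, abs_le.1 h₁₂]
end

section
/- Let n ≥ 1 and let z_1,…,z_n and z′_1,…,z′_n be vectors in ℝ^d, each of Euclidean norm 1. Then |∑_{i,j} ⟨z_i, z_j⟩² − ∑_{i,j} ⟨z′_i, z′_j⟩²| ≤ 8·n·∑_{i=1}^n ‖z_i − z′_i‖₂. -/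
open scoped RealInnerProductSpace

/-! Each Gram entry `⟪zᵢ, zⱼ⟫` moves by at most `‖zᵢ - z'ᵢ‖ + ‖zⱼ - z'ⱼ‖`, and
since all entries lie in `[-1, 1]`, squaring at most doubles the error. Summing over the `n²`
pairs gives the bound with constant `4n`. -/

open Finset

lemma abs_sq_sub_sq_le_two_mul_abs_sub {x y : ℝ} (hx : |x| ≤ 1) (hy : |y| ≤ 1) :
    |x ^ 2 - y ^ 2| ≤ 2 * |x - y| := by
  have hsum : |x + y| ≤ 2 := (abs_add_le x y).trans (by linarith)
  calc |x ^ 2 - y ^ 2| = |x - y| * |x + y| := by rw [← abs_mul]; ring_nf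
    _ ≤ |x - y| * 2 := by gcongr
    _ = 2 * |x - y| := mul_comm _ _

lemma sum_sum_add_eq_two_mul_card_mul_sum {ι : Type*} [Fintype ι] (a : ι → ℝ) :
    ∑ i, ∑ j, (a i + a j) = 2 * Fintype.card ι * ∑ i, a i := by
  simp only [sum_add_distrib, sum_const, card_univ, nsmul_eq_mul, ← mul_sum]
  ring

section InnerProductSpace

variable {E : Type*} [NormedAddCommGroup E] [InnerProductSpace ℝ E]

lemma abs_real_inner_le_one_of_norm_eq_one {x y : E} (hx : ‖x‖ = 1) (hy : ‖y‖ = 1) :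
    |⟪x, y⟫| ≤ 1 := by
  simpa [hx, hy] using abs_real_inner_le_norm x y

lemma abs_real_inner_sub_real_inner_le {x y x' y' : E} (hy : ‖y‖ = 1) (hx' : ‖x'‖ = 1) :
    |⟪x, y⟫ - ⟪x', y'⟫| ≤ ‖x - x'‖ + ‖y - y'‖ := by
  have split : ⟪x, y⟫ - ⟪x', y'⟫ = ⟪x - x', y⟫ + ⟪x', y - y'⟫ := by
    simp only [inner_sub_left, inner_sub_right]; ring
  calc |⟪x, y⟫ - ⟪x', y'⟫| ≤ |⟪x - x', y⟫| + |⟪x', y - y'⟫| := split ▸ abs_add_le _ _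
    _ ≤ ‖x - x'‖ * ‖y‖ + ‖x'‖ * ‖y - y'‖ :=
      add_le_add (abs_real_inner_le_norm _ _) (abs_real_inner_le_norm _ _)
    _ = ‖x - x'‖ + ‖y - y'‖ := by rw [hy, hx', mul_one, one_mul]

lemma abs_sq_real_inner_sub_sq_real_inner_le {x y x' y' : E} (hx : ‖x‖ = 1) (hy : ‖y‖ = 1)
    (hx' : ‖x'‖ = 1) (hy' : ‖y'‖ = 1) :
    |⟪x, y⟫ ^ 2 - ⟪x', y'⟫ ^ 2| ≤ 2 * (‖x - x'‖ + ‖y - y'‖) :=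
  (abs_sq_sub_sq_le_two_mul_abs_sub (abs_real_inner_le_one_of_norm_eq_one hx hy)
    (abs_real_inner_le_one_of_norm_eq_one hx' hy')).trans
    (by gcongr; exact abs_real_inner_sub_real_inner_le hy hx')

theorem abs_sum_sq_gram_sub_sum_sq_gram_le {ι : Type*} [Fintype ι] {z z' : ι → E}
    (hz : ∀ i, ‖z i‖ = 1) (hz' : ∀ i, ‖z' i‖ = 1) :
    |(∑ i, ∑ j, ⟪z i, z j⟫ ^ 2) - ∑ i, ∑ j, ⟪z' i, z' j⟫ ^ 2| ≤
      4 * Fintype.card ι * ∑ i, ‖z i - z' i‖ := by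
  calc |(∑ i, ∑ j, ⟪z i, z j⟫ ^ 2) - ∑ i, ∑ j, ⟪z' i, z' j⟫ ^ 2|
      = |∑ i, ∑ j, (⟪z i, z j⟫ ^ 2 - ⟪z' i, z' j⟫ ^ 2)| := by
        simp only [sum_sub_distrib]
    _ ≤ ∑ i, ∑ j, |⟪z i, z j⟫ ^ 2 - ⟪z' i, z' j⟫ ^ 2| :=
        (abs_sum_le_sum_abs _ _).trans (sum_le_sum fun i _ => abs_sum_le_sum_abs _ _)
    _ ≤ ∑ i, ∑ j, 2 * (‖z i - z' i‖ + ‖z j - z' j‖) :=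
        sum_le_sum fun i _ => sum_le_sum fun j _ =>
          abs_sq_real_inner_sub_sq_real_inner_le (hz i) (hz j) (hz' i) (hz' j)
    _ = 4 * Fintype.card ι * ∑ i, ‖z i - z' i‖ := by
        simp only [← mul_sum, sum_sum_add_eq_two_mul_card_mul_sum]; ring

end InnerProductSpace

theorem statement17_general {n d : ℕ}
    (z z' : Fin n → EuclideanSpace ℝ (Fin d))
    (hz : ∀ i, ‖z i‖ = 1) (hz' : ∀ i, ‖z' i‖ = 1) :
    |(∑ i, ∑ j, ⟪z i, z j⟫ ^ 2) - ∑ i, ∑ j, ⟪z' i, z' j⟫ ^ 2| ≤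
      8 * n * ∑ i, ‖z i - z' i‖ := by
  have hS : 0 ≤ ∑ i, ‖z i - z' i‖ := sum_nonneg fun i _ => norm_nonneg _
  calc _ ≤ 4 * Fintype.card (Fin n) * ∑ i, ‖z i - z' i‖ :=
        abs_sum_sq_gram_sub_sum_sq_gram_le hz hz'
    _ ≤ 8 * n * ∑ i, ‖z i - z' i‖ := by rw [Fintype.card_fin]; gcongr; norm_num

/-- squared-Frobenius-norm perturbation of Gram matrices of unit
vectors: `|∑ᵢⱼ⟨zᵢ,zⱼ⟩² - ∑ᵢⱼ⟨z'ᵢ,z'ⱼ⟩²| ≤ 8·n·∑ᵢ ‖zᵢ - z'ᵢ‖`. -/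
theorem statement17 {n d : ℕ} (hn : 1 ≤ n)
    (z z' : Fin n → EuclideanSpace ℝ (Fin d))
    (hz : ∀ i, ‖z i‖ = 1) (hz' : ∀ i, ‖z' i‖ = 1) :
    |(∑ i, ∑ j, ⟪z i, z j⟫ ^ 2) - ∑ i, ∑ j, ⟪z' i, z' j⟫ ^ 2| ≤
      8 * n * ∑ i, ‖z i - z' i‖ :=
  statement17_general z z' hz hz'
end
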